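/- Let $p\geq 1$, $\alpha(t)=t+1$ on $\mathbb{R}$, $w$ a positive bounded continuous function with bounded inverse, and suppose there exists $l\in\mathbb{Z}$ with $\beta:=\inf\{\prod_{k=1}^n w(t-k): t\in[l,l+1], n\in\mathbb{N}\}>0$. Then $\{f\in L^p(\mathbb{R},\tau): \|T_{\alpha,w}^n f\|_p\geq 1 \text{ for all } n\in\mathbb{N}\}$ is not $\sigma$-porous in $L^p(\mathbb{R},\tau)$, where $T_{\alpha,w}f=w\cdot(f\circ\alpha)$. -/

import Mathlib

open MeasureTheory Metric Set ENNReal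

/-- `E` is `lam`-porous at `x`: for every `δ > 0` there is `y ∈ B(x;δ) \ {x}` with
`B(y; lam * d(x,y)) ∩ E = ∅`. -/
def PorousAt {X : Type*} [PseudoMetricSpace X] (lam : ℝ) (E : Set X) (x : X) : Prop :=
  ∀ δ > 0, ∃ y ∈ Metric.ball x δ, y ≠ x ∧ Metric.ball y (lam * dist x y) ∩ E = ∅

/-- `E` is `lam`-porous if it is `lam`-porous at each of its points. -/
def Porous {X : Type*} [PseudoMetricSpace X] (lam : ℝ) (E : Set X) : Prop :=
  ∀ x ∈ E, PorousAt lam E x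

/-- `E` is `σ`-`lam`-porous if it is a countable union of `lam`-porous sets. -/
def SigmaPorousFor {X : Type*} [PseudoMetricSpace X] (lam : ℝ) (E : Set X) : Prop :=
  ∃ S : ℕ → Set X, (∀ n, Porous lam (S n)) ∧ E = ⋃ n, S n

/-- `E` is `σ`-porous if it is a countable union of sets, each `lam`-porous for
some `0 < lam < 1`. -/
def SigmaPorous {X : Type*} [PseudoMetricSpace X] (E : Set X) : Prop :=
  ∃ S : ℕ → Set X, (∀ n, ∃ lam : ℝ, 0 < lam ∧ lam < 1 ∧ Porous lam (S n)) ∧ E = ⋃ n, S n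

/-- The `n`-th power of `T_{α,w} f = w · (f ∘ α)` with `α(t) = t + 1` on `ℝ`, pointwise:
`(T^n f)(x) = (∏_{k=0}^{n-1} w(x + k)) f(x + n)`. -/
noncomputable def TR (w : ℝ → ℝ) (n : ℕ) (f : ℝ → ℂ) : ℝ → ℂ :=
  fun x => (∏ k ∈ Finset.range n, (w (x + (k : ℝ)) : ℂ)) * f (x + (n : ℝ))

lemma porous_isNowhereDense {X : Type*} [MetricSpace X] {lam : ℝ} {E : Set X}
    (hl : 0 < lam) (hE : Porous lam E) : IsNowhereDense E := by
  rw [IsNowhereDense, Set.eq_empty_iff_forall_notMem]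
  intro x hx
  obtain ⟨r, hr, hball⟩ := Metric.isOpen_iff.mp isOpen_interior x hx
  have hball' : Metric.ball x r ⊆ closure E := hball.trans interior_subset
  have hclaim : ∃ y s, 0 < s ∧ Metric.ball y s ⊆ Metric.ball x r ∧ Metric.ball y s ∩ E = ∅ := by
    by_cases hc : (Metric.ball x (r/2) ∩ E).Nonempty
    · obtain ⟨z, hz, hzE⟩ := hc
      obtain ⟨y, hy, hyne, hyE⟩ := hE z hzE (r/4) (by positivity)
      have hd : 0 < dist z y := dist_pos.mpr (Ne.symm hyne)
      refine ⟨y, min (lam * dist z y) (r/4), by positivity, ?_, ?_⟩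
      · intro u hu
        have h1 : dist u y < r/4 := lt_of_lt_of_le (mem_ball.mp hu) (min_le_right _ _)
        have h2 : dist y z < r/4 := mem_ball.mp hy
        have h3 : dist z x < r/2 := mem_ball.mp hz
        rw [mem_ball]
        calc dist u x ≤ dist u z + dist z x := dist_triangle u z x
          _ ≤ (dist u y + dist y z) + dist z x := add_le_add_left (dist_triangle u y z) _
          _ < r/4 + r/4 + r/2 := by gcongr
          _ = r := by ring
      · apply Set.eq_empty_of_subset_empty
        rw [← hyE]
        exact Set.inter_subset_inter_left E (Metric.ball_subset_ball (min_le_left _ _))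
    · exact ⟨x, r/2, by positivity, Metric.ball_subset_ball (by linarith),
        Set.not_nonempty_iff_eq_empty.mp hc⟩
  obtain ⟨y, s, hs, hsub, hdisj⟩ := hclaim
  have hyc : y ∈ closure E := hball' (hsub (mem_ball_self hs))
  obtain ⟨b, hbE, hbd⟩ := Metric.mem_closure_iff.mp hyc s hs
  exact absurd (Set.mem_inter (mem_ball'.mpr hbd) hbE) (by rw [hdisj]; exact notMem_empty b)

lemma porous_union_meagre {X : Type*} [MetricSpace X] {S : ℕ → Set X}
    (hS : ∀ n, ∃ lam : ℝ, 0 < lam ∧ lam < 1 ∧ Porous lam (S n)) : IsMeagre (⋃ n, S n) := by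
  apply isMeagre_iUnion
  intro n
  obtain ⟨lam, h0, _, hp⟩ := hS n
  refine isMeagre_iff_countable_union_isNowhereDense.mpr
    ⟨{closure (S n)}, ?_, Set.countable_singleton _, ?_⟩
  · rintro t rfl
    exact (porous_isNowhereDense h0 hp).closure
  · simp [subset_closure]

lemma prod_reindex (w : ℝ → ℝ) (x : ℝ) (n : ℕ) :
    ∏ k ∈ Finset.Icc 1 n, w (x + (n : ℝ) - (k : ℝ)) = ∏ k ∈ Finset.range n, w (x + (k : ℝ)) := by
  refine Finset.prod_nbij' (fun k => n - k) (fun k => n - k) ?_ ?_ ?_ ?_ ?_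
  · intro a ha; simp only [Finset.mem_Icc] at ha; simp only [Finset.mem_range]; omega
  · intro a ha; simp only [Finset.mem_range] at ha; simp only [Finset.mem_Icc]; omega
  · intro a ha; simp only [Finset.mem_Icc] at ha; omega
  · intro a ha; simp only [Finset.mem_range] at ha; omega
  · intro a ha
    simp only [Finset.mem_Icc] at ha
    congr 1
    have h1 : ((n - a : ℕ) : ℝ) = (n : ℝ) - (a : ℝ) := by
      rw [Nat.cast_sub ha.2]
    rw [h1]; ring

lemma TR_lower (p : ℝ≥0∞) (hp0 : p ≠ 0) (hpt : p ≠ ⊤) (w : ℝ → ℝ) (hw0 : ∀ x, 0 < w x)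
    (l : ℝ) {β : ℝ} (hβ0 : 0 < β)
    (hβ : ∀ n : ℕ, ∀ t ∈ Set.Icc l (l + 1), β ≤ ∏ k ∈ Finset.Icc 1 n, w (t - (k : ℝ)))
    (f : ℝ → ℂ) (n : ℕ) :
    ENNReal.ofReal β * eLpNorm f p (volume.restrict (Set.Icc l (l + 1)))
      ≤ eLpNorm (TR w n f) p volume := by
  set q := p.toReal with hq
  have hq0 : 0 < q := ENNReal.toReal_pos hp0 hpt
  set I := Set.Icc l (l + 1) with hI
  set β' := ENNReal.ofReal β with hβ'
  have hβ'q : β' ^ q ≠ ⊤ := ENNReal.rpow_ne_top_of_nonneg hq0.le ofReal_ne_top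
  set H : ℝ → ℝ≥0∞ := fun t => I.indicator (fun s => β' ^ q * (‖f s‖₊ : ℝ≥0∞) ^ q) t with hH
  have hpt1 : ∀ x : ℝ, H (x + (n : ℝ)) ≤ (‖TR w n f x‖₊ : ℝ≥0∞) ^ q := by
    intro x
    by_cases hx : x + (n : ℝ) ∈ I
    · rw [hH]
      simp only [Set.indicator_of_mem hx]
      have hprod : β ≤ ∏ k ∈ Finset.range n, w (x + (k : ℝ)) := by
        have h1 := hβ n (x + (n : ℝ)) hx
        calc β ≤ ∏ k ∈ Finset.Icc 1 n, w (x + (n : ℝ) - (k : ℝ)) := h1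
          _ = _ := prod_reindex w x n
      have hprodpos : 0 < ∏ k ∈ Finset.range n, w (x + (k : ℝ)) :=
        Finset.prod_pos fun k _ => hw0 _
      have hnorm : ‖TR w n f x‖ = (∏ k ∈ Finset.range n, w (x + (k : ℝ))) * ‖f (x + (n : ℝ))‖ := by
        rw [TR, norm_mul]
        congr 1
        rw [show (∏ k ∈ Finset.range n, ((w (x + (k : ℝ)) : ℂ)))
            = (((∏ k ∈ Finset.range n, w (x + (k : ℝ))) : ℝ) : ℂ) by push_cast; ring]
        rw [Complex.norm_real]
        exact Real.norm_of_nonneg hprodpos.le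
      have hkey : β' * (‖f (x + (n : ℝ))‖₊ : ℝ≥0∞) ≤ (‖TR w n f x‖₊ : ℝ≥0∞) := by
        rw [← enorm_eq_nnnorm, ← enorm_eq_nnnorm, ← ofReal_norm, ← ofReal_norm, hβ',
          ← ENNReal.ofReal_mul hβ0.le, hnorm]
        exact ENNReal.ofReal_le_ofReal (mul_le_mul_of_nonneg_right hprod (norm_nonneg _))
      calc β' ^ q * (‖f (x + (n : ℝ))‖₊ : ℝ≥0∞) ^ q
          = (β' * (‖f (x + (n : ℝ))‖₊ : ℝ≥0∞)) ^ q := by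
            rw [ENNReal.mul_rpow_of_nonneg _ _ hq0.le]
        _ ≤ (‖TR w n f x‖₊ : ℝ≥0∞) ^ q := ENNReal.rpow_le_rpow hkey hq0.le
    · rw [hH]
      simp only [Set.indicator_of_notMem hx]
      exact zero_le
  have step : ∫⁻ x, H x ∂volume ≤ ∫⁻ x, (‖TR w n f x‖₊ : ℝ≥0∞) ^ q ∂volume := by
    rw [← lintegral_add_right_eq_self H (n : ℝ)]
    exact lintegral_mono hpt1
  have hHint : ∫⁻ x, H x ∂volume = β' ^ q * ∫⁻ x in I, (‖f x‖₊ : ℝ≥0∞) ^ q ∂volume := by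
    simp only [hH]
    rw [lintegral_indicator measurableSet_Icc, lintegral_const_mul' _ _ hβ'q]
  rw [eLpNorm_eq_lintegral_rpow_enorm_toReal hp0 hpt, eLpNorm_eq_lintegral_rpow_enorm_toReal hp0 hpt]
  calc β' * (∫⁻ x, (‖f x‖₊ : ℝ≥0∞) ^ q ∂(volume.restrict I)) ^ (1 / q)
      = (β' ^ q * ∫⁻ x, (‖f x‖₊ : ℝ≥0∞) ^ q ∂(volume.restrict I)) ^ (1 / q) := by
        rw [ENNReal.mul_rpow_of_nonneg _ _ (by positivity), ← ENNReal.rpow_mul,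
          mul_one_div_cancel hq0.ne', ENNReal.rpow_one]
    _ ≤ (∫⁻ x, (‖TR w n f x‖₊ : ℝ≥0∞) ^ q ∂volume) ^ (1 / q) := by
        apply ENNReal.rpow_le_rpow _ (by positivity)
        rw [← hHint]
        exact step

/-- If `β = inf {∏_{k=1}^n w(t - k) : t ∈ [l, l+1], n ∈ ℕ} > 0` for some `l ∈ ℤ`, then
`{f ∈ L^p(ℝ) : ‖T_{α,w}^n f‖_p ≥ 1 for all n ≥ 1}` is not `σ`-porous, where
`T_{α,w} f = w · (f ∘ α)` and `α(t) = t + 1`. -/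
theorem stmt_19 (p : ℝ≥0∞) [Fact (1 ≤ p)] (hp : p ≠ ⊤)
    (w : ℝ → ℝ) (hw0 : ∀ x, 0 < w x) (hwc : Continuous w)
    (hwb : ∃ C, ∀ x, w x ≤ C) (hwib : ∃ C, ∀ x, (w x)⁻¹ ≤ C)
    (l : ℤ) (hβ : ∃ β > (0 : ℝ), ∀ n : ℕ, ∀ t ∈ Set.Icc (l : ℝ) (l + 1),
      β ≤ ∏ k ∈ Finset.Icc 1 n, w (t - (k : ℝ))) :
    ¬ SigmaPorous {f : Lp ℂ p (volume : Measure ℝ) |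
      ∀ n : ℕ, 1 ≤ n → 1 ≤ eLpNorm (TR w n ⇑f) p volume} := by
  have hple : (1 : ℝ≥0∞) ≤ p := Fact.out
  have hp0 : p ≠ 0 := fun h => by simp [h] at hple
  obtain ⟨β, hβ0, hβle⟩ := hβ
  set I := Set.Icc (l : ℝ) ((l : ℝ) + 1) with hIdef
  have hvol : volume I = 1 := by
    rw [hIdef, Real.volume_Icc]
    norm_num
  have hvne : volume I ≠ ⊤ := by rw [hvol]; exact one_ne_top
  set c : ℂ := ((1 + β⁻¹ : ℝ) : ℂ) with hc
  set g : Lp ℂ p (volume : Measure ℝ) := indicatorConstLp p measurableSet_Icc hvne c with hg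
  intro hSP
  obtain ⟨S, hS, hEq⟩ := hSP
  have hmeagre := porous_union_meagre hS
  have hdense : Dense (⋃ n, S n)ᶜ := dense_of_mem_residual hmeagre
  obtain ⟨f, hfball, hfc⟩ := hdense.inter_open_nonempty (Metric.ball g 1) Metric.isOpen_ball
    ⟨g, Metric.mem_ball_self one_pos⟩
  apply hfc
  rw [← hEq]
  intro n hn
  have hfae := Lp.aestronglyMeasurable f
  have hgae := Lp.aestronglyMeasurable g
  have hsub : eLpNorm (⇑f - ⇑g) p volume < 1 := by
    have hd : dist f g < 1 := mem_ball.mp hfball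
    rw [Lp.dist_def] at hd
    have hne : eLpNorm (⇑f - ⇑g) p volume ≠ ⊤ := by
      rw [eLpNorm_congr_ae (Lp.coeFn_sub f g).symm]
      exact Lp.eLpNorm_ne_top (f - g)
    rw [show (1 : ℝ≥0∞) = ENNReal.ofReal 1 by simp]
    exact (ENNReal.lt_ofReal_iff_toReal_lt hne).mpr hd
  have hcn : (‖c‖₊ : ℝ≥0∞) = ENNReal.ofReal (1 + β⁻¹) := by
    rw [← enorm_eq_nnnorm, ← ofReal_norm, hc, Complex.norm_real]
    congr 1
    exact Real.norm_of_nonneg (by positivity)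
  have hgI : eLpNorm (⇑g) p (volume.restrict I) = ENNReal.ofReal (1 + β⁻¹) := by
    have hae : ⇑g =ᵐ[volume.restrict I] I.indicator (fun _ => c) :=
      ae_restrict_of_ae indicatorConstLp_coeFn
    rw [eLpNorm_congr_ae hae, eLpNorm_indicator_const measurableSet_Icc hp0 hp,
      Measure.restrict_apply_self, hvol, ENNReal.one_rpow, mul_one, enorm_eq_nnnorm, hcn]
  have htri : ENNReal.ofReal (1 + β⁻¹)
      ≤ eLpNorm (⇑f) p (volume.restrict I) + eLpNorm (⇑f - ⇑g) p volume := by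
    calc ENNReal.ofReal (1 + β⁻¹) = eLpNorm (⇑g) p (volume.restrict I) := hgI.symm
      _ = eLpNorm (⇑f + (⇑g - ⇑f)) p (volume.restrict I) := by
          apply eLpNorm_congr_ae
          apply Filter.EventuallyEq.of_eq
          funext x
          simp only [Pi.add_apply, Pi.sub_apply]
          ring
      _ ≤ eLpNorm (⇑f) p (volume.restrict I) + eLpNorm (⇑g - ⇑f) p (volume.restrict I) :=
          eLpNorm_add_le hfae.restrict (hgae.restrict.sub hfae.restrict) hple
      _ ≤ eLpNorm (⇑f) p (volume.restrict I) + eLpNorm (⇑f - ⇑g) p volume := by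
          gcongr
          rw [eLpNorm_sub_comm]
          exact eLpNorm_mono_measure _ Measure.restrict_le_self
  have hflow : ENNReal.ofReal β⁻¹ ≤ eLpNorm (⇑f) p (volume.restrict I) := by
    have h1 : ENNReal.ofReal (1 + β⁻¹) = 1 + ENNReal.ofReal β⁻¹ := by
      rw [ENNReal.ofReal_add one_pos.le (by positivity), ENNReal.ofReal_one]
    have h2 : (1 : ℝ≥0∞) + ENNReal.ofReal β⁻¹ ≤ eLpNorm (⇑f) p (volume.restrict I) + 1 := by
      rw [← h1]
      exact htri.trans (add_le_add_right hsub.le _)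
    rw [add_comm (1 : ℝ≥0∞)] at h2
    exact (ENNReal.add_le_add_iff_right one_ne_top).mp h2
  calc (1 : ℝ≥0∞) = ENNReal.ofReal β * ENNReal.ofReal β⁻¹ := by
        rw [← ENNReal.ofReal_mul hβ0.le, mul_inv_cancel₀ hβ0.ne', ENNReal.ofReal_one]
    _ ≤ ENNReal.ofReal β * eLpNorm (⇑f) p (volume.restrict I) := by gcongr
    _ ≤ eLpNorm (TR w n ⇑f) p volume := TR_lower p hp0 hp w hw0 (l : ℝ) hβ0 hβle (⇑f) n
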